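/- arXiv:1104.5573 — 5 statements merged into one kernel-verified Lean document; each statement's English description precedes it below -/
import Mathlib

section
/- Let P be a lattice polytope of dimension n in M_ℝ ≅ ℝ^n with lattice M ≅ ℤ^n. Then for every integer k ≥ n−1, the equality (kP ∩ M) + (P ∩ M) = ((k+1)P) ∩ M holds, i.e. every lattice point of (k+1)P is the sum of a lattice point of kP and a lattice point of P. -/
/-!
Write a lattice point `z` of `(k+1)P` as `z = ∑ lᵢ vᵢ` with affinely independent lattice points
`vᵢ` of `P`, `lᵢ ≥ 0` and `∑ lᵢ = k + 1` (Carathéodory). If some `lᵢ ≥ 1`, then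
`z = (z - vᵢ) + vᵢ` with `z - vᵢ ∈ kP`. Otherwise `k + 1 ≥ n` forces `n + 1` vertices and
`0 < lᵢ < 1` for all `i`, so `p = ∑ (1 - lᵢ) vᵢ = ∑ vᵢ - z` is a lattice point of the simplex.
Replacing a suitable vertex `vⱼ` by `p` gives a simplex whose cone still contains `z`, and whose
normalized volume is `(1 - lⱼ)` times the old one. Normalized volumes of lattice simplices are
positive integers, so this descent ends in the first case.
-/

open Set Pointwise

/-- `x` is a lattice point (all coordinates are integers). -/
def IsLat {n : ℕ} (x : Fin n → ℝ) : Prop := ∀ i, ∃ m : ℤ, x i = (m : ℝ)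

/-- The set of lattice points of `P`. -/
def latPts {n : ℕ} (P : Set (Fin n → ℝ)) : Set (Fin n → ℝ) := {x ∈ P | IsLat x}

/-- `P` is a lattice polytope: the convex hull of finitely many lattice points. -/
def IsLatticePolytope {n : ℕ} (P : Set (Fin n → ℝ)) : Prop :=
  ∃ S : Finset (Fin n → ℝ), (∀ x ∈ S, IsLat x) ∧ P = convexHull ℝ (S : Set (Fin n → ℝ))

/-- The dimension of a polytope: the dimension of its affine hull. -/
noncomputable def polyDim {n : ℕ} (P : Set (Fin n → ℝ)) : ℕ :=
  Module.finrank ℝ (affineSpan ℝ P).direction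

/-- `P` is normal: for every `k ≥ 1`, every lattice point of the dilate `k • P`
is a sum of `k` lattice points of `P`. -/
def IsNormal {n : ℕ} (P : Set (Fin n → ℝ)) : Prop :=
  ∀ k : ℕ, 1 ≤ k → ∀ v ∈ latPts ((k : ℝ) • P),
    ∃ u : Fin k → (Fin n → ℝ), (∀ i, u i ∈ latPts P) ∧ v = ∑ i, u i

lemma exists_one_le_of_card_le_sum {ι : Type*} [Fintype ι] {l : ι → ℝ}
    (hpos : 0 < ∑ i, l i) (hcard : (Fintype.card ι : ℝ) ≤ ∑ i, l i) : ∃ i, 1 ≤ l i := by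
  by_contra! h
  have : Nonempty ι := by
    by_contra! hι
    simp at hpos
  have := Finset.sum_lt_sum_of_nonempty Finset.univ_nonempty fun i _ => h i
  simp only [Finset.sum_const, Finset.card_univ, nsmul_eq_mul, mul_one] at this
  linarith

lemma pos_of_forall_lt_one {ι : Type*} [Fintype ι] [Nontrivial ι] {l : ι → ℝ}
    (hlt : ∀ i, l i < 1) (hsum : (Fintype.card ι : ℝ) - 1 ≤ ∑ i, l i) (i : ι) : 0 < l i := by
  classical
  have hrest := Finset.sum_lt_sum_of_nonempty
    (Finset.univ_nontrivial.erase_nonempty (a := i)) fun j _ => hlt j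
  rw [← Finset.add_sum_erase _ _ (Finset.mem_univ i)] at hsum
  rw [Finset.sum_const, Finset.card_erase_of_mem (Finset.mem_univ _), Finset.card_univ,
    nsmul_one, Nat.cast_pred Fintype.card_pos] at hrest
  linarith

section Convex

variable {E : Type*} [AddCommGroup E] [Module ℝ E] {ι : Type*} [Fintype ι]

lemma Convex.sum_smul_mem_smul [Nonempty ι] {P : Set E} (hP : Convex ℝ P) {v : ι → E}
    (hv : ∀ i, v i ∈ P) {l : ι → ℝ} (hl : ∀ i, 0 ≤ l i) :
    ∑ i, l i • v i ∈ (∑ i, l i) • P := by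
  rcases (Finset.sum_nonneg fun i _ => hl i).eq_or_lt with h | h
  · have hl0 : ∀ i, l i = 0 := fun i =>
      (Finset.sum_eq_zero_iff_of_nonneg fun i _ => hl i).1 h.symm i (Finset.mem_univ i)
    rw [← h, zero_smul_set ⟨_, hv (Classical.arbitrary ι)⟩]
    simp [hl0]
  · refine ⟨∑ i, ((∑ j, l j)⁻¹ * l i) • v i, hP.sum_mem (fun i _ => by positivity [hl i])
      (by rw [← Finset.mul_sum, inv_mul_cancel₀ h.ne']) fun i _ => hv i, ?_⟩
    simp only [Finset.smul_sum, smul_smul, mul_inv_cancel_left₀ h.ne']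

/-- The cone over `conv v` is covered by the cones over the simplices obtained by replacing one
vertex by the point `∑ μᵢ vᵢ`; the right `j` is one minimizing `lⱼ / μⱼ`. -/
lemma exists_update_sum_smul_eq [Nonempty ι] [DecidableEq ι] (v : ι → E) {μ l : ι → ℝ}
    (hμ : ∀ i, 0 < μ i) (hμsum : ∑ i, μ i = 1) (hl : ∀ i, 0 ≤ l i) :
    ∃ j, ∃ l' : ι → ℝ, (∀ i, 0 ≤ l' i) ∧ ∑ i, l' i = ∑ i, l i ∧
      ∑ i, l' i • Function.update v j (∑ i, μ i • v i) i = ∑ i, l i • v i := by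
  obtain ⟨j, -, hj⟩ := Finset.univ.exists_min_image (fun i => l i / μ i) Finset.univ_nonempty
  set c := l j / μ j
  have hc : 0 ≤ c := div_nonneg (hl j) (hμ j).le
  have hcj : c * μ j = l j := div_mul_cancel₀ _ (hμ j).ne'
  have hle : ∀ i, c * μ i ≤ l i := fun i => (le_div_iff₀ (hμ i)).1 (hj i (Finset.mem_univ i))
  set p := ∑ i, μ i • v i
  have hterm : ∀ i, (l i - c * μ i + if i = j then c else 0) • Function.update v j p i =
      (l i - c * μ i) • v i + if i = j then c • p else 0 := by
    intro i
    rcases eq_or_ne i j with rfl | h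
    · simp [hcj]
    · simp [h]
  refine ⟨j, fun i => l i - c * μ i + if i = j then c else 0, fun i => ?_, ?_, ?_⟩
  · have := hle i
    dsimp only
    split_ifs <;> linarith
  · simp [Finset.sum_add_distrib, ← Finset.mul_sum, hμsum]
  · simp [hterm, Finset.sum_add_distrib, sub_smul, mul_smul, ← Finset.smul_sum, p]

lemma exists_affineIndependent_of_mem_smul_convexHull [FiniteDimensional ℝ E] {s : Set E}
    {c : ℝ} (hc : 0 ≤ c) {z : E} (hz : z ∈ c • convexHull ℝ s) :
    ∃ m ≤ Module.finrank ℝ E + 1, ∃ v : Fin m → E, AffineIndependent ℝ v ∧ (∀ i, v i ∈ s) ∧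
      ∃ l : Fin m → ℝ, (∀ i, 0 ≤ l i) ∧ ∑ i, l i = c ∧ z = ∑ i, l i • v i := by
  obtain ⟨w, hw, rfl⟩ := hz
  obtain ⟨κ, _, v, μ, hvs, hind, hμ, hμsum, rfl⟩ := eq_pos_convex_span_of_mem_convexHull hw
  let e := (Fintype.equivFin κ).symm
  refine ⟨Fintype.card κ, hind.card_le_finrank_succ.trans
      (Nat.add_le_add_right (Submodule.finrank_le _) 1), v ∘ e, hind.comp_embedding e.toEmbedding,
    fun i => hvs ⟨_, rfl⟩, fun i => c * μ (e i), fun i => mul_nonneg hc (hμ _).le, ?_, ?_⟩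
  · rw [← Finset.mul_sum, e.sum_comp μ, hμsum, mul_one]
  · simp only [Function.comp_apply, mul_smul, ← Finset.smul_sum]
    rw [e.sum_comp fun i => μ i • v i]

end Convex

section Lattice

variable {n : ℕ}

def lattice (n : ℕ) : AddSubgroup (Fin n → ℝ) where
  carrier := {x | IsLat x}
  add_mem' {x y} hx hy i := by
    obtain ⟨a, ha⟩ := hx i
    obtain ⟨b, hb⟩ := hy i
    exact ⟨a + b, by simp [ha, hb]⟩
  zero_mem' _ := ⟨0, by simp⟩
  neg_mem' {x} hx i := by
    obtain ⟨a, ha⟩ := hx i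
    exact ⟨-a, by simp [ha]⟩

lemma mem_latPts {P : Set (Fin n → ℝ)} {x : Fin n → ℝ} : x ∈ latPts P ↔ x ∈ P ∧ x ∈ lattice n :=
  Iff.rfl

lemma latPts_smul_add_latPts_subset {P : Set (Fin n → ℝ)} (hP : Convex ℝ P) {c : ℝ}
    (hc : 0 ≤ c) : latPts (c • P) + latPts P ⊆ latPts ((c + 1) • P) := by
  rintro _ ⟨a, ⟨ha, ha'⟩, b, ⟨hb, hb'⟩, rfl⟩
  refine mem_latPts.2 ⟨?_, add_mem ha' hb'⟩
  rw [hP.add_smul hc zero_le_one, one_smul]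
  exact add_mem_add ha hb

lemma sum_smul_mem_latPts_add_of_one_le {ι : Type*} [Fintype ι] {P : Set (Fin n → ℝ)}
    (hP : Convex ℝ P) {v : ι → Fin n → ℝ} (hv : ∀ i, v i ∈ latPts P) {l : ι → ℝ}
    (hl : ∀ i, 0 ≤ l i) {c : ℝ} (hsum : ∑ i, l i = c + 1) (hz : ∑ i, l i • v i ∈ lattice n)
    {j : ι} (hj : 1 ≤ l j) : ∑ i, l i • v i ∈ latPts (c • P) + latPts P := by
  classical
  have : Nonempty ι := ⟨j⟩
  set l' : ι → ℝ := fun i => l i - if i = j then 1 else 0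
  have hl' : ∀ i, 0 ≤ l' i := fun i => by
    simp only [l']
    split_ifs with h
    · exact sub_nonneg.2 (h ▸ hj)
    · simpa using hl i
  have hsum' : ∑ i, l' i = c := by simp [l', Finset.sum_sub_distrib, hsum]
  have hz' : ∑ i, l' i • v i = ∑ i, l i • v i - v j := by
    simp [l', sub_smul, Finset.sum_sub_distrib, ite_smul]
  refine ⟨_, ⟨?_, sub_mem hz (hv j).2⟩, v j, hv j, sub_add_cancel _ _⟩
  simpa [hz', hsum'] using hP.sum_smul_mem_smul (fun i => (hv i).1) hl'

/-- `|det (homMatrix v)|` is the normalized volume of the simplex `conv v`. -/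
def homMatrix (v : Fin (n + 1) → Fin n → ℝ) : Matrix (Fin (n + 1)) (Fin (n + 1)) ℝ :=
  Matrix.of fun i => Fin.snoc (v i) 1

lemma homMatrix_det_ne_zero {v : Fin (n + 1) → Fin n → ℝ} (h : AffineIndependent ℝ v) :
    (homMatrix v).det ≠ 0 := by
  intro hdet
  obtain ⟨g, hg0, hg⟩ := Matrix.exists_vecMul_eq_zero_iff.2 hdet
  have hsum : ∑ i, g i = 0 := by
    simpa [homMatrix, Matrix.vecMul, dotProduct] using congrFun hg (Fin.last n)
  have hcomb : ∑ i, g i • v i = 0 := funext fun j => by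
    simpa [homMatrix, Matrix.vecMul, dotProduct, Finset.sum_apply] using congrFun hg j.castSucc
  exact hg0 (funext fun i => affineIndependent_iff.1 h Finset.univ g hsum hcomb i
    (Finset.mem_univ i))

lemma exists_int_eq_homMatrix_det {v : Fin (n + 1) → Fin n → ℝ} (hv : ∀ i, v i ∈ lattice n) :
    ∃ D : ℤ, (homMatrix v).det = D := by
  have hint : ∀ i j, ∃ z : ℤ, homMatrix v i j = z := by
    intro i j
    induction j using Fin.lastCases with
    | last => exact ⟨1, by simp [homMatrix]⟩
    | cast j => simpa [homMatrix] using hv i j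
  choose B hB using hint
  exact ⟨(Matrix.of B).det, by rw [Int.cast_det]; congr; ext; simp [hB]⟩

lemma homMatrix_update_det (v : Fin (n + 1) → Fin n → ℝ) {μ : Fin (n + 1) → ℝ}
    (hμ : ∑ i, μ i = 1) (j : Fin (n + 1)) :
    (homMatrix (Function.update v j (∑ i, μ i • v i))).det = μ j * (homMatrix v).det := by
  have : homMatrix (Function.update v j (∑ i, μ i • v i)) =
      (homMatrix v).updateRow j (∑ i, μ i • homMatrix v i) := by
    ext a b
    rcases eq_or_ne a j with rfl | h
    · induction b using Fin.lastCases with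
      | last => simp [homMatrix, Finset.sum_apply, hμ]
      | cast b => simp [homMatrix, Finset.sum_apply]
    · simp [homMatrix, h]
  rw [this, Matrix.det_updateRow_sum, smul_eq_mul]

lemma exists_subsimplex_of_forall_lt_one {P : Set (Fin n → ℝ)} (hP : Convex ℝ P)
    {v : Fin (n + 1) → Fin n → ℝ} (hv : ∀ i, v i ∈ latPts P) {l : Fin (n + 1) → ℝ}
    (hpos : ∀ i, 0 < l i) (hlt : ∀ i, l i < 1) (hsum : ∑ i, l i = n)
    (hz : ∑ i, l i • v i ∈ lattice n) :
    ∃ v' : Fin (n + 1) → Fin n → ℝ, (∀ i, v' i ∈ latPts P) ∧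
      (∃ t, 0 < t ∧ t < 1 ∧ (homMatrix v').det = t * (homMatrix v).det) ∧
      ∃ l' : Fin (n + 1) → ℝ, (∀ i, 0 ≤ l' i) ∧ ∑ i, l' i = ∑ i, l i ∧
        ∑ i, l' i • v' i = ∑ i, l i • v i := by
  set μ : Fin (n + 1) → ℝ := fun i => 1 - l i
  have hμ : ∀ i, 0 < μ i := fun i => sub_pos.2 (hlt i)
  have hμsum : ∑ i, μ i = 1 := by
    simp [μ, Finset.sum_sub_distrib, hsum]
  have hp : ∑ i, μ i • v i ∈ latPts P := by
    refine ⟨hP.sum_mem (fun i _ => (hμ i).le) hμsum fun i _ => (hv i).1, ?_⟩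
    have : ∑ i, μ i • v i = ∑ i, v i - ∑ i, l i • v i := by
      simp [μ, sub_smul, Finset.sum_sub_distrib]
    exact this ▸ sub_mem (sum_mem fun i _ => (hv i).2) hz
  obtain ⟨j, l', hl', hsum', hz'⟩ := exists_update_sum_smul_eq v hμ hμsum fun i => (hpos i).le
  refine ⟨Function.update v j (∑ i, μ i • v i), fun i => ?_,
    ⟨μ j, hμ j, by linarith [hpos j], homMatrix_update_det v hμsum j⟩, l', hl', hsum', hz'⟩
  rcases eq_or_ne i j with rfl | h
  · simpa using hp
  · simpa [h] using hv i

theorem sum_smul_mem_latPts_add {k : ℕ} {P : Set (Fin n → ℝ)} (hP : Convex ℝ P)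
    (hk : n ≤ k + 1) {v : Fin (n + 1) → Fin n → ℝ} (hv : ∀ i, v i ∈ latPts P)
    (hdet : (homMatrix v).det ≠ 0) {l : Fin (n + 1) → ℝ} (hl : ∀ i, 0 ≤ l i)
    (hsum : ∑ i, l i = k + 1) (hz : ∑ i, l i • v i ∈ lattice n) :
    ∑ i, l i • v i ∈ latPts ((k : ℝ) • P) + latPts P := by
  obtain ⟨D, hD⟩ := exists_int_eq_homMatrix_det fun i => (hv i).2
  induction hN : D.natAbs using Nat.strong_induction_on generalizing v l D with
  | _ N ih =>
  by_cases hone : ∃ j, 1 ≤ l j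
  · obtain ⟨j, hj⟩ := hone
    exact sum_smul_mem_latPts_add_of_one_le hP hv hl hsum hz hj
  push Not at hone
  have hlt : (k : ℝ) + 1 < n + 1 := by
    have := mt (exists_one_le_of_card_le_sum (by rw [hsum]; positivity)) (by simpa using hone)
    simpa [hsum] using this
  have hkn : k + 1 = n := by
    have : k < n := by exact_mod_cast (by linarith : (k : ℝ) < n)
    omega
  have : Nontrivial (Fin (n + 1)) := Fin.nontrivial_iff_two_le.2 (by omega)
  have hpos : ∀ i, 0 < l i := pos_of_forall_lt_one hone (by simp [hsum, ← hkn])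
  obtain ⟨v', hv', ⟨t, ht0, ht1, hdet'⟩, l', hl', hsum', hz'⟩ :=
    exists_subsimplex_of_forall_lt_one hP hv hpos hone (by rw [hsum, ← hkn]; push_cast; rfl) hz
  obtain ⟨D', hD'⟩ := exists_int_eq_homMatrix_det fun i => (hv' i).2
  have hDD' : (D' : ℝ) = t * D := by rw [← hD', ← hD, hdet']
  have hD0 : (D : ℝ) ≠ 0 := hD ▸ hdet
  have hdecr : D'.natAbs < N := by
    have : |(D' : ℝ)| < |(D : ℝ)| := by
      rw [hDD', abs_mul, abs_of_pos ht0]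
      exact mul_lt_of_lt_one_left (abs_pos.2 hD0) ht1
    rw [← hN]
    zify
    exact_mod_cast this
  rw [← hz'] at hz ⊢
  exact ih _ hdecr hv' (by rw [hD', hDD']; exact mul_ne_zero ht0.ne' hD0) hl'
    (hsum'.trans hsum) hz D' hD' rfl

end Lattice

theorem stmt0_general (n : ℕ) (P : Set (Fin n → ℝ)) (hP : IsLatticePolytope P)
    (k : ℕ) (hk : n - 1 ≤ k) :
    latPts ((k : ℝ) • P) + latPts P = latPts (((k : ℝ) + 1) • P) := by
  obtain ⟨S, hS, rfl⟩ := hP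
  have hconv := convex_convexHull ℝ (S : Set (Fin n → ℝ))
  refine (latPts_smul_add_latPts_subset hconv k.cast_nonneg).antisymm ?_
  rintro z ⟨hz, hzlat⟩
  obtain ⟨m, hm, v, hind, hvS, l, hl, hsum, rfl⟩ :=
    exists_affineIndependent_of_mem_smul_convexHull (by positivity) hz
  rw [Module.finrank_fin_fun] at hm
  have hv : ∀ i, v i ∈ latPts (convexHull ℝ (S : Set (Fin n → ℝ))) := fun i =>
    ⟨subset_convexHull ℝ _ (hvS i), hS _ (hvS i)⟩
  rcases hm.lt_or_eq with hm | rfl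
  · obtain ⟨j, hj⟩ := exists_one_le_of_card_le_sum (l := l) (by rw [hsum]; positivity)
      (by rw [hsum, Fintype.card_fin]; exact_mod_cast (by omega : m ≤ k + 1))
    exact sum_smul_mem_latPts_add_of_one_le hconv hv hl hsum hzlat hj
  · exact sum_smul_mem_latPts_add hconv (by omega) hv (homMatrix_det_ne_zero hind) hl hsum hzlat

/-- Nakagawa's theorem: for a lattice polytope `P` of dimension `n` and any `k ≥ n - 1`,
`(kP ∩ M) + (P ∩ M) = ((k+1)P) ∩ M`. -/
theorem stmt0 (n : ℕ) (P : Set (Fin n → ℝ)) (hP : IsLatticePolytope P)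
    (hdim : polyDim P = n) (k : ℕ) (hk : n - 1 ≤ k) :
    latPts ((k : ℝ) • P) + latPts P = latPts (((k : ℝ) + 1) • P) :=
  stmt0_general n P hP k hk
end

section
/- A lattice polytope P of dimension 3 is normal (i.e. (P∩M)+⋯+(P∩M), k times, equals (kP)∩M for all k ≥ 1) if and only if (P∩M) + (P∩M) = (2P)∩M. -/
open Set Pointwise

/-!
Normality follows by induction on `k` once `(k + 1)P ∩ M = kP ∩ M + P ∩ M` for `k = 1`, which
is the hypothesis, and for all `k ≥ d - 1` (Nakagawa's bound, `d` the ambient dimension).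
For the latter, write `z ∈ (k + 1)P ∩ M` by Carathéodory as `∑ μᵢ vᵢ` over affinely independent
vertices of `P` with `∑ μᵢ = k + 1`. A coefficient `μⱼ ≥ 1` lets us split off `vⱼ`. Otherwise
there are `d + 1` vertices and `k + 1 = d`, and the lattice point `u = ∑ vᵢ - z = ∑ (1 - μᵢ) vᵢ`
lies in the simplex. Replacing a suitable vertex `vⱼ` by `u` keeps `z` in `d` times the new
simplex and multiplies its normalized volume, a positive integer, by `1 - μⱼ < 1`; so the
process stops at a representation with a coefficient `≥ 1`.
-/

def latticeAddSubgroup (n : ℕ) : AddSubgroup (Fin n → ℝ) where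
  carrier := {x | IsLat x}
  add_mem' {x y} hx hy i := by
    obtain ⟨a, ha⟩ := hx i
    obtain ⟨b, hb⟩ := hy i
    exact ⟨a + b, by simp [ha, hb]⟩
  zero_mem' _ := ⟨0, by simp⟩
  neg_mem' {x} hx i := by
    obtain ⟨a, ha⟩ := hx i
    exact ⟨-a, by simp [ha]⟩

theorem IsLat.add {n : ℕ} {x y : Fin n → ℝ} (hx : IsLat x) (hy : IsLat y) : IsLat (x + y) :=
  (latticeAddSubgroup n).add_mem hx hy

theorem IsLat.sub {n : ℕ} {x y : Fin n → ℝ} (hx : IsLat x) (hy : IsLat y) : IsLat (x - y) :=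
  (latticeAddSubgroup n).sub_mem hx hy

theorem isLat_sum {n : ℕ} {ι : Type*} (s : Finset ι) {f : ι → Fin n → ℝ}
    (hf : ∀ i ∈ s, IsLat (f i)) : IsLat (∑ i ∈ s, f i) :=
  (latticeAddSubgroup n).sum_mem hf

theorem IsLatticePolytope.convex {n : ℕ} {P : Set (Fin n → ℝ)} (hP : IsLatticePolytope P) :
    Convex ℝ P := by
  obtain ⟨S, -, rfl⟩ := hP
  exact convex_convexHull ℝ _

theorem latPts_smul_add_latPts_smul_subset {n : ℕ} {P : Set (Fin n → ℝ)} (hP : Convex ℝ P)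
    {a b : ℝ} (ha : 0 ≤ a) (hb : 0 ≤ b) :
    latPts (a • P) + latPts (b • P) ⊆ latPts ((a + b) • P) := by
  rintro _ ⟨x, ⟨hx, hxL⟩, y, ⟨hy, hyL⟩, rfl⟩
  exact ⟨hP.add_smul ha hb ▸ add_mem_add hx hy, hxL.add hyL⟩

theorem isNormal_of_latPts_succ_smul_subset {n : ℕ} {P : Set (Fin n → ℝ)}
    (h : ∀ k : ℕ, 1 ≤ k → latPts (((k + 1 : ℕ) : ℝ) • P) ⊆ latPts ((k : ℝ) • P) + latPts P) :
    IsNormal P := by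
  intro k hk
  induction k, hk using Nat.le_induction with
  | base =>
    intro v hv
    exact ⟨fun _ => v, fun _ => by simpa using hv, by simp⟩
  | succ k hk ih =>
    intro v hv
    obtain ⟨a, ha, t, ht, rfl⟩ := h k hk hv
    obtain ⟨u, hu, rfl⟩ := ih a ha
    refine ⟨Fin.snoc u t, Fin.lastCases (by simpa using ht) (by simpa using hu), ?_⟩
    simp [Fin.sum_univ_castSucc]

theorem Convex.sum_smul_sub_mem_smul {ι E : Type*} [Fintype ι] [AddCommGroup E] [Module ℝ E]
    {P : Set E} (hP : Convex ℝ P) {w : ι → E} (hw : ∀ i, w i ∈ P) {μ : ι → ℝ}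
    (hμ : ∀ i, 0 ≤ μ i) {c : ℝ} (hc : 0 < c) (hsum : ∑ i, μ i = c + 1) {j : ι} (hj : 1 ≤ μ j) :
    ∑ i, μ i • w i - w j ∈ c • P := by
  classical
  set μ' : ι → ℝ := μ - Pi.single j 1
  have hμ' : ∀ i, 0 ≤ μ' i := fun i => by
    rcases eq_or_ne i j with rfl | hij <;> simp [μ', *]
  have hsum' : ∑ i, μ' i = c := by simp [μ', Finset.sum_sub_distrib, hsum]
  have hrepr : ∑ i, μ i • w i - w j = c • ∑ i, (μ' i / c) • w i := by
    simp [μ', Finset.smul_sum, smul_smul, mul_div_cancel₀ _ hc.ne', sub_smul,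
      Finset.sum_sub_distrib, Pi.single_apply]
  rw [hrepr]
  refine Set.smul_mem_smul_set
    (hP.sum_mem (fun i _ => div_nonneg (hμ' i) hc.le) ?_ fun i _ => hw i)
  rw [← Finset.sum_div, hsum', div_self hc.ne']

theorem sum_smul_mem_latPts_smul_add_latPts {d : ℕ} {ι : Type*} [Fintype ι]
    {P : Set (Fin d → ℝ)} (hP : Convex ℝ P) {w : ι → Fin d → ℝ} (hw : ∀ i, w i ∈ latPts P)
    {μ : ι → ℝ} (hμ : ∀ i, 0 ≤ μ i) {k : ℕ} (hk : 0 < k) (hsum : ∑ i, μ i = k + 1)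
    (hz : IsLat (∑ i, μ i • w i)) {j : ι} (hj : 1 ≤ μ j) :
    ∑ i, μ i • w i ∈ latPts ((k : ℝ) • P) + latPts P :=
  ⟨_, ⟨hP.sum_smul_sub_mem_smul (fun i => (hw i).1) hμ (by exact_mod_cast hk) hsum hj,
    hz.sub (hw j).2⟩, w j, hw j, sub_add_cancel _ _⟩

theorem exists_nonneg_sum_smul_update_eq {ι E : Type*} [Fintype ι] [DecidableEq ι] [Nonempty ι]
    [AddCommGroup E] [Module ℝ E] (w : ι → E) {ν μ : ι → ℝ} (hν : ∀ i, 0 < ν i)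
    (hν1 : ∑ i, ν i = 1) (hμ : ∀ i, 0 ≤ μ i) :
    ∃ j, ∃ μ' : ι → ℝ, (∀ i, 0 ≤ μ' i) ∧ ∑ i, μ' i = ∑ i, μ i ∧
      ∑ i, μ' i • Function.update w j (∑ i, ν i • w i) i = ∑ i, μ i • w i := by
  -- The minimal ratio `μ j / ν j` keeps the new coefficients `μ i - c * ν i` nonnegative.
  obtain ⟨j, hj⟩ := Finite.exists_min fun i => μ i / ν i
  set c := μ j / ν j
  have hcν : ∀ i, c * ν i ≤ μ i := fun i => (le_div_iff₀ (hν i)).1 (hj i)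
  have hcj : c * ν j = μ j := div_mul_cancel₀ _ (hν j).ne'
  set u := ∑ i, ν i • w i
  set μ' : ι → ℝ := μ - c • ν + Pi.single j c
  refine ⟨j, μ', fun i => ?_, ?_, ?_⟩
  · rcases eq_or_ne i j with rfl | hij
    · simp [μ', hcj, div_nonneg (hμ i) (hν i).le, c]
    · simpa [μ', hij] using hcν i
  · simp [μ', Finset.sum_add_distrib, Finset.sum_sub_distrib, ← Finset.mul_sum, hν1]
  · have hupd : ∀ i, μ' i • Function.update w j u i =
        (μ i - c * ν i) • w i + (Pi.single j (c • u) : ι → E) i := fun i => by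
      rcases eq_or_ne i j with rfl | hij
      · simp [μ', hcj]
      · simp [μ', hij]
    simp [hupd, Finset.sum_add_distrib, sub_smul, Finset.sum_sub_distrib, Finset.smul_sum,
      smul_smul, u]

/-- The absolute value of its determinant is `d!` times the volume of the simplex
with vertices `w`. -/
noncomputable def vertexMatrix {d : ℕ} (w : Fin (d + 1) → Fin d → ℝ) :
    Matrix (Fin (d + 1)) (Fin (d + 1)) ℝ :=
  Matrix.of fun i => Fin.snoc (w i) 1

theorem exists_intCast_eq_det_vertexMatrix {d : ℕ} {w : Fin (d + 1) → Fin d → ℝ}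
    (hw : ∀ i, IsLat (w i)) : ∃ m : ℤ, (vertexMatrix w).det = m := by
  choose W hW using hw
  refine ⟨(Matrix.of fun i => Fin.snoc (W i) (1 : ℤ)).det, ?_⟩
  rw [Int.cast_det]
  congr 1
  ext i j
  refine Fin.lastCases ?_ (fun j => ?_) j <;> simp [vertexMatrix, hW]

theorem det_vertexMatrix_ne_zero {d : ℕ} {w : Fin (d + 1) → Fin d → ℝ}
    (hw : AffineIndependent ℝ w) : (vertexMatrix w).det ≠ 0 := by
  intro hdet
  obtain ⟨v, hv0, hv⟩ := Matrix.exists_vecMul_eq_zero_iff.2 hdet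
  have hsum : ∑ i, v i = 0 := by
    simpa [vertexMatrix, Matrix.vecMul, dotProduct] using congrFun hv (Fin.last d)
  have hcomb : ∑ i, v i • w i = 0 := funext fun j => by
    simpa [vertexMatrix, Matrix.vecMul, dotProduct, Finset.sum_apply] using congrFun hv j.castSucc
  exact hv0 (funext fun i => affineIndependent_iff.1 hw _ v hsum hcomb i (Finset.mem_univ i))

theorem det_vertexMatrix_update_sum_smul {d : ℕ} (w : Fin (d + 1) → Fin d → ℝ) (j : Fin (d + 1))
    {ν : Fin (d + 1) → ℝ} (hν : ∑ i, ν i = 1) :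
    (vertexMatrix (Function.update w j (∑ i, ν i • w i))).det = ν j * (vertexMatrix w).det := by
  have hrow : vertexMatrix (Function.update w j (∑ i, ν i • w i)) =
      (vertexMatrix w).updateRow j (∑ i, ν i • vertexMatrix w i) := by
    ext i k
    rcases eq_or_ne i j with rfl | hij
    · refine Fin.lastCases ?_ (fun k => ?_) k
      · simpa [vertexMatrix, Finset.sum_apply] using hν.symm
      · simp [vertexMatrix, Finset.sum_apply]
    · simp [vertexMatrix, hij]
  rw [hrow, Matrix.det_updateRow_sum, smul_eq_mul]

theorem exists_latPts_rep_one_le_coeff {d : ℕ} (hd : 0 < d) {P : Set (Fin d → ℝ)}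
    (hP : Convex ℝ P) {z : Fin d → ℝ} (hz : IsLat z) (w : Fin (d + 1) → Fin d → ℝ)
    (hw : ∀ i, w i ∈ latPts P) (hdet : (vertexMatrix w).det ≠ 0) (μ : Fin (d + 1) → ℝ)
    (hμ : ∀ i, 0 ≤ μ i) (hsum : ∑ i, μ i = d) (hzμ : ∑ i, μ i • w i = z) :
    ∃ (w' : Fin (d + 1) → Fin d → ℝ) (μ' : Fin (d + 1) → ℝ), (∀ i, w' i ∈ latPts P) ∧
      (∀ i, 0 ≤ μ' i) ∧ ∑ i, μ' i = d ∧ ∑ i, μ' i • w' i = z ∧ ∃ j, 1 ≤ μ' j := by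
  obtain ⟨m, hm⟩ := exists_intCast_eq_det_vertexMatrix fun i => (hw i).2
  induction hN : m.natAbs using Nat.strong_induction_on generalizing w μ m with
  | _ N ih =>
  by_cases hbig : ∃ j, 1 ≤ μ j
  · exact ⟨w, μ, hw, hμ, hsum, hzμ, hbig⟩
  push Not at hbig
  have hpos : ∀ i, 0 < μ i := fun i => by
    have hrest : ∑ k : Fin d, μ (i.succAbove k) < d := by
      have : Nonempty (Fin d) := Fin.pos_iff_nonempty.1 hd
      calc ∑ k : Fin d, μ (i.succAbove k) < ∑ _k : Fin d, (1 : ℝ) :=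
            Finset.sum_lt_sum_of_nonempty Finset.univ_nonempty fun k _ => hbig _
        _ = d := by simp
    rw [Fin.sum_univ_succAbove μ i] at hsum
    linarith
  set ν : Fin (d + 1) → ℝ := fun i => 1 - μ i
  have hν1 : ∑ i, ν i = 1 := by simp [ν, Finset.sum_sub_distrib, hsum]
  have hu : ∑ i, ν i • w i = ∑ i, w i - z := by
    simp [ν, sub_smul, Finset.sum_sub_distrib, hzμ]
  have huP : ∑ i, ν i • w i ∈ latPts P :=
    ⟨hP.sum_mem (fun i _ => (sub_pos.2 (hbig i)).le) hν1 fun i _ => (hw i).1,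
      hu ▸ (isLat_sum _ fun i _ => (hw i).2).sub hz⟩
  obtain ⟨j, μ', hμ', hsum', hzμ'⟩ :=
    exists_nonneg_sum_smul_update_eq w (fun i => sub_pos.2 (hbig i)) hν1 hμ
  set w' := Function.update w j (∑ i, ν i • w i)
  have hw' : ∀ i, w' i ∈ latPts P := fun i => by
    rcases eq_or_ne i j with rfl | hij
    · simpa [w'] using huP
    · simpa [w', hij] using hw i
  have hdet' : (vertexMatrix w').det = ν j * (vertexMatrix w).det :=
    det_vertexMatrix_update_sum_smul w j hν1
  obtain ⟨m', hm'⟩ := exists_intCast_eq_det_vertexMatrix fun i => (hw' i).2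
  have hlt : m'.natAbs < N := by
    have : |(m' : ℝ)| < |(m : ℝ)| := by
      rw [← hm', hdet', ← hm, abs_mul, abs_of_pos (sub_pos.2 (hbig j))]
      exact mul_lt_of_lt_one_left (abs_pos.2 hdet) (by simp [hpos j])
    have : |m'| < |m| := by exact_mod_cast this
    zify [← hN]
    exact this
  exact ih _ hlt w' hw' (hdet' ▸ mul_ne_zero (sub_pos.2 (hbig j)).ne' hdet) μ' hμ'
    (hsum' ▸ hsum) (hzμ'.trans hzμ) m' hm' rfl

theorem latPts_succ_smul_subset {d k : ℕ} {P : Set (Fin d → ℝ)} (hP : IsLatticePolytope P)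
    (hk : 0 < k) (hdk : d ≤ k + 1) :
    latPts (((k + 1 : ℕ) : ℝ) • P) ⊆ latPts ((k : ℝ) • P) + latPts P := by
  have hconv := hP.convex
  obtain ⟨S, hS, rfl⟩ := hP
  rintro z ⟨hzP, hz⟩
  obtain ⟨p, hp, rfl⟩ := Set.mem_smul_set.1 hzP
  obtain ⟨ι, _, v, a, hvS, hvind, ha, ha1, rfl⟩ := eq_pos_convex_span_of_mem_convexHull hp
  have hv : ∀ i, v i ∈ latPts (convexHull ℝ (S : Set (Fin d → ℝ))) := fun i =>
    ⟨subset_convexHull ℝ _ (hvS ⟨i, rfl⟩), hS _ (hvS ⟨i, rfl⟩)⟩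
  set μ : ι → ℝ := fun i => (k + 1) * a i
  have hμ : ∀ i, 0 ≤ μ i := fun i => mul_nonneg (by positivity) (ha i).le
  have hsum : ∑ i, μ i = k + 1 := by simp [μ, ← Finset.mul_sum, ha1]
  have hzμ : ((k + 1 : ℕ) : ℝ) • ∑ i, a i • v i = ∑ i, μ i • v i := by
    simp [μ, Finset.smul_sum, smul_smul]
  rw [hzμ] at hz ⊢
  by_cases hbig : ∃ j, 1 ≤ μ j
  · obtain ⟨j, hj⟩ := hbig
    exact sum_smul_mem_latPts_smul_add_latPts hconv hv hμ hk hsum hz hj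
  push Not at hbig
  have hcard : Fintype.card ι ≤ d + 1 := hvind.card_le_finrank_succ.trans
    (Nat.add_le_add_right ((Submodule.finrank_le _).trans_eq (Module.finrank_fin_fun ℝ)) 1)
  have hlt : (k : ℝ) + 1 < Fintype.card ι := by
    calc (k : ℝ) + 1 = ∑ i, μ i := hsum.symm
      _ < ∑ _i : ι, (1 : ℝ) := Finset.sum_lt_sum_of_nonempty
          (Finset.nonempty_of_sum_ne_zero (ha1 ▸ one_ne_zero)) fun i _ => hbig i
      _ = Fintype.card ι := by simp
  obtain ⟨hd, hcardι⟩ : k + 1 = d ∧ Fintype.card ι = d + 1 := by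
    have : k + 1 < Fintype.card ι := by exact_mod_cast hlt
    omega
  let e : Fin (d + 1) ≃ ι := (Fintype.equivFinOfCardEq hcardι).symm
  obtain ⟨w', μ', hw', hμ', hsum', hzμ', j, hj⟩ :=
    exists_latPts_rep_one_le_coeff (by omega) hconv hz (v ∘ e) (fun i => hv _)
      (det_vertexMatrix_ne_zero (hvind.comp_embedding e.toEmbedding))
      (μ ∘ e) (fun i => hμ _) ((e.sum_comp μ).trans (by rw [hsum, ← hd]; push_cast; ring))
      (e.sum_comp fun i => μ i • v i)
  rw [← hzμ'] at hz ⊢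
  exact sum_smul_mem_latPts_smul_add_latPts hconv hw' hμ' hk
    (by rw [hsum', ← hd]; push_cast; ring) hz hj

theorem stmt1_general (P : Set (Fin 3 → ℝ)) (hP : IsLatticePolytope P) :
    IsNormal P ↔ latPts P + latPts P = latPts ((2 : ℝ) • P) := by
  refine ⟨fun hN => ?_, fun h2 => isNormal_of_latPts_succ_smul_subset fun k hk => ?_⟩
  · refine subset_antisymm ?_ fun v hv => ?_
    · simpa [one_add_one_eq_two] using
        latPts_smul_add_latPts_smul_subset hP.convex zero_le_one zero_le_one
    · obtain ⟨u, hu, rfl⟩ := hN 2 one_le_two v (by simpa using hv)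
      rw [Fin.sum_univ_two]
      exact add_mem_add (hu 0) (hu 1)
  · rcases hk.eq_or_lt with rfl | hk
    · norm_num [h2]
    · exact latPts_succ_smul_subset hP (by omega) (by omega)

/-- A 3-dimensional lattice polytope is normal iff `(P ∩ M) + (P ∩ M) = (2P) ∩ M`. -/
theorem stmt1 (P : Set (Fin 3 → ℝ)) (hP : IsLatticePolytope P) (hdim : polyDim P = 3) :
    IsNormal P ↔ latPts P + latPts P = latPts ((2 : ℝ) • P) :=
  stmt1_general P hP
end

section
/- Let A = Conv{(0,0), (a,0), (0,1), (b,1)} with a, b positive integers (a trapezoid of height 1). Then A is the union of the lattice parallelograms A_i = Conv{(0,0),(a',0),(i,1),(a'+i,1)} for i = 0,…,|b−a| where a' = min(a,b), when a ≤ b (and symmetrically when a > b). In particular A is covered by lattice parallelograms. -/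
open Set Pointwise

/-! A quadrilateral with a bottom edge at height 0 and a top edge at height 1 is cut out by
`0 ≤ y ≤ 1` and by the two lateral edges, so at height `t` the trapezoid is the interval
`[0, a + t (b - a)]` and the `i`-th parallelogram is `[t i, a + t i]`. Since `t ≤ 1 ≤ a`,
consecutive intervals overlap, and together they cover the whole row. -/

lemma convexHull_heightOne_quadrilateral {x₀ x₁ y₀ y₁ : ℝ} (hx : x₀ ≤ x₁) (hy : y₀ ≤ y₁) :
    convexHull ℝ {![x₀, 0], ![x₁, 0], ![y₀, 1], ![y₁, 1]} =
      {p : Fin 2 → ℝ | 0 ≤ p 1 ∧ p 1 ≤ 1 ∧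
        (1 - p 1) * x₀ + p 1 * y₀ ≤ p 0 ∧ p 0 ≤ (1 - p 1) * x₁ + p 1 * y₁} := by
  apply Subset.antisymm
  · refine convexHull_min ?_ ?_
    · rintro q (rfl | rfl | rfl | rfl) <;> simpa
    · intro u ⟨hu₀, hu₁, hul, hur⟩ v ⟨hv₀, hv₁, hvl, hvr⟩ s r hs hr hsr
      obtain rfl : r = 1 - s := by linarith
      simp only [mem_ofPred_eq, Pi.add_apply, Pi.smul_apply, smul_eq_mul]
      refine ⟨by positivity, by nlinarith, ?_, ?_⟩
      · linarith [mul_le_mul_of_nonneg_left hul hs, mul_le_mul_of_nonneg_left hvl hr]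
      · linarith [mul_le_mul_of_nonneg_left hur hs, mul_le_mul_of_nonneg_left hvr hr]
  · rintro p ⟨ht₀, ht₁, hl, hr⟩
    set t := p 1
    have hull_convex := convex_convexHull ℝ ({![x₀, 0], ![x₁, 0], ![y₀, 1], ![y₁, 1]} :
      Set (Fin 2 → ℝ))
    have vertex (q : Fin 2 → ℝ) (hq : q ∈ ({![x₀, 0], ![x₁, 0], ![y₀, 1], ![y₁, 1]} :
        Set (Fin 2 → ℝ))) := subset_convexHull ℝ _ hq
    -- `p` lies on the horizontal chord at height `t` joining the two lateral edges.
    have left := hull_convex (vertex ![x₀, 0] (by simp)) (vertex ![y₀, 1] (by simp))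
      (sub_nonneg.2 ht₁) ht₀ (sub_add_cancel 1 t)
    have right := hull_convex (vertex ![x₁, 0] (by simp)) (vertex ![y₁, 1] (by simp))
      (sub_nonneg.2 ht₁) ht₀ (sub_add_cancel 1 t)
    obtain ⟨u, v, hu, hv, huv, hp⟩ : p 0 ∈ segment ℝ ((1 - t) * x₀ + t * y₀)
        ((1 - t) * x₁ + t * y₁) := by
      rw [segment_eq_Icc (hl.trans hr)]; exact ⟨hl, hr⟩
    convert hull_convex left right hu hv huv using 1
    ext j
    fin_cases j
    · simpa [smul_eq_mul, mul_add] using hp.symm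
    · simp only [Fin.mk_one, Pi.add_apply, Pi.smul_apply, smul_eq_mul, Matrix.cons_val_one,
        Matrix.cons_val_zero, mul_zero, mul_one, zero_add]
      linear_combination (-t) * huv

lemma exists_le_mem_Icc_of_mem_Icc {A t x : ℝ} (htA : t ≤ A) (n : ℕ)
    (hx : x ∈ Icc 0 (A + n * t)) : ∃ i ≤ n, x ∈ Icc (i * t) (A + i * t) := by
  induction n with
  | zero => exact ⟨0, le_rfl, by simpa using hx⟩
  | succ n ih =>
    by_cases hxn : x ≤ A + n * t
    · obtain ⟨i, hin, hi⟩ := ih ⟨hx.1, hxn⟩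
      exact ⟨i, hin.trans n.le_succ, hi⟩
    · -- consecutive intervals overlap because `t ≤ A`
      refine ⟨n + 1, le_rfl, ?_, hx.2⟩
      push_cast at hxn ⊢
      linarith

theorem stmt9_general (a b : ℕ) (ha : 1 ≤ a) (hab : a ≤ b) :
    convexHull ℝ {![0, 0], ![(a : ℝ), 0], ![0, 1], ![(b : ℝ), 1]} =
      ⋃ i ∈ Finset.range (b - a + 1),
        convexHull ℝ {![0, 0], ![(a : ℝ), 0], ![(i : ℝ), 1], ![(a : ℝ) + (i : ℝ), 1]} := by
  have parallelogram (i : ℕ) := convexHull_heightOne_quadrilateral (x₀ := 0) (x₁ := a)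
    (y₀ := i) (y₁ := a + i) (Nat.cast_nonneg a) (le_add_of_nonneg_left (Nat.cast_nonneg a))
  ext p
  simp only [mem_iUnion₂, Finset.mem_range, parallelogram, mem_ofPred_eq,
    convexHull_heightOne_quadrilateral (Nat.cast_nonneg a) (Nat.cast_nonneg b)]
  have hA : p 1 ≤ 1 → p 1 ≤ a := fun ht₁ ↦ ht₁.trans (by exact_mod_cast ha)
  constructor
  · rintro ⟨ht₀, ht₁, hl, hr⟩
    obtain ⟨i, hi, hil, hir⟩ := exists_le_mem_Icc_of_mem_Icc (hA ht₁) (b - a)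
      ⟨by simpa using hl, by rw [Nat.cast_sub hab]; linarith⟩
    exact ⟨i, by omega, ht₀, ht₁, by linarith, by linarith⟩
  · rintro ⟨i, hi, ht₀, ht₁, hl, hr⟩
    have hib : (a : ℝ) + i ≤ b := by exact_mod_cast (by omega : a + i ≤ b)
    exact ⟨ht₀, ht₁, by nlinarith, by nlinarith⟩

/-- The height-one trapezoid `Conv{(0,0),(a,0),(0,1),(b,1)}` with `a ≤ b` is the union of
the lattice parallelograms `A_i = Conv{(0,0),(a,0),(i,1),(a+i,1)}`, `i = 0, …, b - a`. -/
theorem stmt9 (a b : ℕ) (ha : 1 ≤ a) (hb : 1 ≤ b) (hab : a ≤ b) :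
    convexHull ℝ {![0, 0], ![(a : ℝ), 0], ![0, 1], ![(b : ℝ), 1]} =
      ⋃ i ∈ Finset.range (b - a + 1),
        convexHull ℝ {![0, 0], ![(a : ℝ), 0], ![(i : ℝ), 1], ![(a : ℝ) + (i : ℝ), 1]} :=
  stmt9_general a b ha hab
end

section
/- For q ≥ 2, the lattice tetrahedron Q_q = Conv{(0,0,0), (1,0,0), (0,1,0), (1,1,q)} is not very ample; equivalently, there exists a vertex v of Q_q and an integer k ≥ 1 and a lattice point of k·Q_q − k·v not lying in the semigroup generated by (Q_q − v) ∩ ℤ³. -/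
open Set Pointwise

/-! The vertex `0` of the Reeve tetrahedron `Q_q` is exposed by the functional `x + y`, and
`(1, 1, 1) = 2 • (1/2, 1/2, 1/2)` is a lattice point of `2 Q_q`. But every lattice point of `Q_q`
has height `z = 0` or `z ≥ q`: if `z ≥ 1`, the facets `z ≤ q x` and `z ≤ q y` force `x, y ≥ 1`,
and then the facet `q (x + y - 1) ≤ z` through `e₁, e₂, (1, 1, q)` gives `z ≥ q`. So for `q ≥ 2`
no sum of lattice points of `Q_q` has height `1`. -/

def reeveTetrahedron (q : ℝ) : Set (Fin 3 → ℝ) :=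
  convexHull ℝ {0, ![1, 0, 0], ![0, 1, 0], ![1, 1, q]}

lemma Finset.sum_eq_zero_or_le_of_forall {ι M : Type*} [AddCommMonoid M] [PartialOrder M]
    [IsOrderedAddMonoid M] {s : Finset ι} {f : ι → M} {c : M} (hc : 0 ≤ c)
    (h : ∀ i ∈ s, f i = 0 ∨ c ≤ f i) : ∑ i ∈ s, f i = 0 ∨ c ≤ ∑ i ∈ s, f i := by
  by_cases hzero : ∀ i ∈ s, f i = 0
  · exact Or.inl (Finset.sum_eq_zero hzero)
  push Not at hzero
  obtain ⟨i, hi, hfi⟩ := hzero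
  have hnonneg : ∀ j ∈ s, 0 ≤ f j := fun j hj => (h j hj).elim (·.ge) hc.trans
  exact Or.inr (((h i hi).resolve_left hfi).trans (Finset.single_le_sum hnonneg hi))

lemma IsLat.one_le_of_pos {n : ℕ} {p : Fin n → ℝ} (hp : IsLat p) (i : Fin n) (hpos : 0 < p i) :
    1 ≤ p i := by
  obtain ⟨m, hm⟩ := hp i
  rw [hm] at hpos ⊢
  exact Int.cast_one_le_of_pos (Int.cast_pos.1 hpos)

lemma mem_extremePoints_of_linearMap_le {𝕜 E : Type*} [Field 𝕜] [LinearOrder 𝕜]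
    [IsStrictOrderedRing 𝕜] [AddCommGroup E] [Module 𝕜 E] {A : Set E} {x : E} (f : E →ₗ[𝕜] 𝕜)
    (hx : x ∈ A) (hle : ∀ y ∈ A, f x ≤ f y)    (heq : ∀ y ∈ A, f y = f x → y = x) : x ∈ extremePoints 𝕜 A := by
  refine mem_extremePoints.2 ⟨hx, fun y hy z hz hxyz => ?_⟩
  obtain ⟨a, b, ha, hb, hab, rfl⟩ := hxyz
  have hfy := hle y hy
  have hfz := hle z hz
  simp only [map_add, map_smul, smul_eq_mul] at hfy hfz heq
  obtain rfl : a = 1 - b := by linarith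
  have hyz : f y = f z := le_antisymm (le_of_mul_le_mul_left (by linarith) ha)
    (le_of_mul_le_mul_left (by linarith) hb)
  exact ⟨heq y hy (by rw [← hyz]; ring), heq z hz (by rw [← hyz]; ring)⟩

namespace reeveTetrahedron

variable {q : ℝ}

lemma subset_halfSpace {α β γ c : ℝ} (h0 : 0 ≤ c) (h1 : α ≤ c) (h2 : β ≤ c)
    (h3 : α + β + γ * q ≤ c) :
    reeveTetrahedron q ⊆ {p | α * p 0 + β * p 1 + γ * p 2 ≤ c} := by
  refine convexHull_min ?_ (convex_halfSpace_le ?_ c)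
  · rintro p (rfl | rfl | rfl | rfl) <;> simpa
  · exact ⟨fun x y => by simp only [Pi.add_apply]; ring,
      fun r x => by simp only [Pi.smul_apply, smul_eq_mul]; ring⟩

lemma facets (hq : 0 ≤ q) {p : Fin 3 → ℝ} (hp : p ∈ reeveTetrahedron q) :
    0 ≤ p 2 ∧ p 2 ≤ q * p 0 ∧ p 2 ≤ q * p 1 ∧ q * (p 0 + p 1 - 1) ≤ p 2 := by
  have h₁ := subset_halfSpace (α := 0) (β := 0) (γ := -1) le_rfl le_rfl le_rfl
    (by linarith) hp
  have h₂ := subset_halfSpace (α := -q) (β := 0) (γ := 1) le_rfl (by linarith) le_rfl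
    (by linarith) hp
  have h₃ := subset_halfSpace (α := 0) (β := -q) (γ := 1) le_rfl le_rfl (by linarith)
    (by linarith) hp
  have h₄ := subset_halfSpace (α := q) (β := q) (γ := -1) hq le_rfl le_rfl
    (by linarith) hp
  simp only [mem_ofPred_eq] at h₁ h₂ h₃ h₄
  refine ⟨?_, ?_, ?_, ?_⟩ <;> linarith

lemma zero_mem_extremePoints (hq : 0 < q) :
    (0 : Fin 3 → ℝ) ∈ extremePoints ℝ (reeveTetrahedron q) := by
  let f : (Fin 3 → ℝ) →ₗ[ℝ] ℝ :=
    LinearMap.proj (R := ℝ) (φ := fun _ : Fin 3 => ℝ) 0 + LinearMap.proj 1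
  have hf : ∀ p, f p = p 0 + p 1 := fun p => rfl
  have hxy : ∀ p ∈ reeveTetrahedron q, 0 ≤ p 0 ∧ 0 ≤ p 1 := fun p hp => by
    obtain ⟨h₁, h₂, h₃, -⟩ := facets hq.le hp
    exact ⟨nonneg_of_mul_nonneg_right (h₁.trans h₂) hq,
      nonneg_of_mul_nonneg_right (h₁.trans h₃) hq⟩
  refine mem_extremePoints_of_linearMap_le f (subset_convexHull ℝ _ (by simp))
    (fun p hp => ?_) (fun p hp hfp => ?_)
  · simp only [hf, Pi.zero_apply, add_zero]
    linarith [hxy p hp]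
  · obtain ⟨h₁, h₂, -⟩ := facets hq.le hp
    obtain ⟨hx, hy⟩ := hxy p hp
    simp only [hf, Pi.zero_apply, add_zero] at hfp
    have hx0 : p 0 = 0 := by linarith
    have hy0 : p 1 = 0 := by linarith
    have hz0 : p 2 = 0 := by nlinarith
    ext i; fin_cases i <;> assumption

lemma half_mem (hq : 1 ≤ q) : ![1 / 2, 1 / 2, 1 / 2] ∈ reeveTetrahedron q := by
  let w : Fin 4 → ℝ := ![1 / (2 * q), 1 / 2 - 1 / (2 * q), 1 / 2 - 1 / (2 * q), 1 / (2 * q)]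
  let z : Fin 4 → Fin 3 → ℝ := ![0, ![1, 0, 0], ![0, 1, 0], ![1, 1, q]]
  have hq0 : q ≠ 0 := by positivity
  have hcomb : ![1 / 2, 1 / 2, 1 / 2] = ∑ i, w i • z i := by
    funext j
    fin_cases j <;> simp [w, z, Fin.sum_univ_four]
    field_simp
  rw [hcomb]
  refine (convex_convexHull ℝ _).sum_mem (fun i _ => ?_) ?_ (fun i _ => ?_)
  · fin_cases i <;> simp [w] <;> first | positivity | exact inv_le_one_of_one_le₀ hq
  · simp [w, Fin.sum_univ_four]; ring
  · fin_cases i <;> exact subset_convexHull ℝ _ (by simp [z])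

lemma eq_zero_or_le_of_isLat (hq : 0 < q) {p : Fin 3 → ℝ} (hp : p ∈ reeveTetrahedron q)
    (hlat : IsLat p) : p 2 = 0 ∨ q ≤ p 2 := by
  obtain ⟨h₁, h₂, h₃, h₄⟩ := facets hq.le hp
  rcases h₁.eq_or_lt with h | hpos
  · exact Or.inl h.symm
  have hz := hlat.one_le_of_pos 2 hpos
  have hx := hlat.one_le_of_pos 0 (pos_of_mul_pos_right (by linarith) hq.le)
  have hy := hlat.one_le_of_pos 1 (pos_of_mul_pos_right (by linarith) hq.le)
  exact Or.inr (by nlinarith)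

lemma sum_apply_two_ne_one (hq : 1 < q) {l : ℕ} {u : Fin l → Fin 3 → ℝ}
    (hu : ∀ i, IsLat (u i) ∧ u i ∈ reeveTetrahedron q) : (∑ i, u i) 2 ≠ 1 := by
  have hheight := Finset.sum_eq_zero_or_le_of_forall (s := Finset.univ) (f := fun i => u i 2)
    (c := q) (by linarith)
    (fun i _ => eq_zero_or_le_of_isLat (by linarith) (hu i).2 (hu i).1)
  rw [Finset.sum_apply]
  rcases hheight with h | h <;> intro h1 <;> linarith

end reeveTetrahedron

/-- For `q ≥ 2`, the tetrahedron `Q_q = Conv{0, e₁, e₂, (1,1,q)}` is not very ample: some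
lattice point of a dilated cone at a vertex is not in the semigroup generated by
`(Q_q - v) ∩ ℤ³`. -/
theorem stmt17 (q : ℕ) (hq : 2 ≤ q) :
    ∃ v ∈ Set.extremePoints ℝ
        (convexHull ℝ {(0 : Fin 3 → ℝ), ![1,0,0], ![0,1,0], ![1,1,(q : ℝ)]}),
      ∃ k : ℕ, 1 ≤ k ∧ ∃ w : Fin 3 → ℝ, IsLat w ∧
        w + (k : ℝ) • v ∈
          (k : ℝ) • convexHull ℝ {(0 : Fin 3 → ℝ), ![1,0,0], ![0,1,0], ![1,1,(q : ℝ)]} ∧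
        ¬ ∃ (l : ℕ) (u : Fin l → (Fin 3 → ℝ)),
            (∀ i, IsLat (u i) ∧ u i + v ∈
              convexHull ℝ {(0 : Fin 3 → ℝ), ![1,0,0], ![0,1,0], ![1,1,(q : ℝ)]}) ∧
            w = ∑ i, u i := by
  have hq' : (1 : ℝ) < q := by exact_mod_cast hq
  refine ⟨0, reeveTetrahedron.zero_mem_extremePoints (by linarith), 2, one_le_two, ![1, 1, 1],
    fun i => ⟨1, by fin_cases i <;> simp⟩, ?_, ?_⟩
  · have hhalf : (![1, 1, 1] : Fin 3 → ℝ) = (2 : ℝ) • ![1 / 2, 1 / 2, 1 / 2] := by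
      funext j; fin_cases j <;> norm_num
    rw [smul_zero, add_zero, Nat.cast_ofNat, hhalf]
    exact smul_mem_smul_set (reeveTetrahedron.half_mem hq'.le)
  · rintro ⟨l, u, hu, hsum⟩
    refine reeveTetrahedron.sum_apply_two_ne_one hq' (fun i => ⟨(hu i).1, ?_⟩) ?_
    · exact add_zero (u i) ▸ (hu i).2
    · simpa using (congrFun hsum 2).symm
end

section
/- For q ≥ 4, the lattice polytope P_q = Q_q + I, where Q_q = Conv{(0,0,0),(1,0,0),(0,1,0),(1,1,q)} and I = Conv{(0,0,0),(0,0,1)}, is not normal: there exists a lattice point of 2P_q that is not the sum of two lattice points of P_q. -/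
open Set Pointwise

/-!
The point `v = (1, 1, 3)` lies in `2 P_q`, since `v / 2 = (1/2, 1/2, 1) + (0, 0, 1/2)` and
`(1/2, 1/2, 1) = q⁻¹ (1, 1, q) + (1/2 - q⁻¹) ((1, 0, 0) + (0, 1, 0))` lies in `Q_q`.
The facet inequalities `0 ≤ z ≤ q x, z ≤ q y, q (x + y - 1) ≤ z` of `Q_q` show that the lattice
points of `P_q` lie over the four vertices of the unit square, at height at most `1` over
`(0,0)`, `(1,0)`, `(0,1)` and at height at least `q` over `(1,1)`. A sum of two of them lying over
`(1,1)` therefore has height at most `2` or at least `q > 3`, never `3`.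
-/

lemma intCast_eq_zero_or_eq_one {R : Type*} [Ring R] [LinearOrder R] [IsStrictOrderedRing R]
    {m : ℤ} (h₀ : 0 ≤ (m : R)) (h₁ : (m : R) ≤ 1) : (m : R) = 0 ∨ (m : R) = 1 := by
  have : m = 0 ∨ m = 1 := by
    have : 0 ≤ m := by exact_mod_cast h₀
    have : m ≤ 1 := by exact_mod_cast h₁
    omega
  rcases this with rfl | rfl <;> simp

namespace BrunsGubeladze

variable {q : ℝ}

/-- The tetrahedron `Q_q`. -/
abbrev tetra (q : ℝ) : Set (Fin 3 → ℝ) :=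
  convexHull ℝ {0, ![1, 0, 0], ![0, 1, 0], ![1, 1, q]}

/-- The polytope `P_q = Q_q + I`. -/
abbrev prism (q : ℝ) : Set (Fin 3 → ℝ) := tetra q + segment ℝ 0 ![0, 0, 1]

def tetraFacets (q : ℝ) : Set (Fin 3 → ℝ) :=
  {p | 0 ≤ p 2 ∧ p 2 ≤ q * p 0 ∧ p 2 ≤ q * p 1 ∧ q * (p 0 + p 1 - 1) ≤ p 2}

lemma convex_tetraFacets (q : ℝ) : Convex ℝ (tetraFacets q) := by
  rintro x ⟨hx₁, hx₂, hx₃, hx₄⟩ y ⟨hy₁, hy₂, hy₃, hy₄⟩ a b ha hb hab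
  simp only [tetraFacets, mem_ofPred_eq, Pi.add_apply, Pi.smul_apply, smul_eq_mul]
  refine ⟨by positivity, ?_, ?_, ?_⟩ <;> nlinarith [mul_le_mul_of_nonneg_left hx₂ ha]

lemma tetra_subset_tetraFacets (hq : 0 ≤ q) : tetra q ⊆ tetraFacets q := by
  refine convexHull_min ?_ (convex_tetraFacets q)
  rintro v (rfl | rfl | rfl | rfl) <;> simp [tetraFacets, hq]

lemma facet_bounds_of_mem_prism (hq : 0 < q) {u : Fin 3 → ℝ} (hu : u ∈ prism q) :
    (0 ≤ u 0 ∧ u 0 ≤ 1) ∧ (0 ≤ u 1 ∧ u 1 ≤ 1) ∧ 0 ≤ u 2 ∧ u 2 ≤ q * u 0 + 1 ∧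
      u 2 ≤ q * u 1 + 1 ∧ q * (u 0 + u 1 - 1) ≤ u 2 := by
  obtain ⟨p, hp, s, hs, rfl⟩ := hu
  rw [segment_eq_image] at hs
  obtain ⟨t, ⟨ht₀, ht₁⟩, rfl⟩ := hs
  obtain ⟨h₁, h₂, h₃, h₄⟩ := tetra_subset_tetraFacets hq.le hp
  have hp₀ : 0 ≤ p 0 := nonneg_of_mul_nonneg_right (h₁.trans h₂) hq
  have hp₁ : 0 ≤ p 1 := nonneg_of_mul_nonneg_right (h₁.trans h₃) hq
  have hp₀' : p 0 ≤ 1 := by nlinarith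
  have hp₁' : p 1 ≤ 1 := by nlinarith
  simp only [smul_zero, zero_add, Pi.add_apply, Pi.smul_apply, smul_eq_mul, Matrix.cons_val_zero,
    Matrix.cons_val_one, Matrix.cons_val_two, Matrix.tail_cons, Matrix.head_cons, mul_zero, mul_one,
    add_zero]
  refine ⟨⟨hp₀, hp₀'⟩, ⟨hp₁, hp₁'⟩, ?_, ?_, ?_, ?_⟩ <;> linarith

lemma half_mem_tetra (hq : 2 ≤ q) : ![1 / 2, 1 / 2, 1] ∈ tetra q := by
  have hq₀ : 0 < q := by linarith
  have hw : q⁻¹ ≤ 2⁻¹ := inv_anti₀ two_pos hq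
  have h : (![1 / 2, 1 / 2, 1] : Fin 3 → ℝ) = ∑ i, ![q⁻¹, 2⁻¹ - q⁻¹, 2⁻¹ - q⁻¹, q⁻¹] i •
      ![0, ![1, 0, 0], ![0, 1, 0], ![1, 1, q]] i := by
    ext i; fin_cases i <;> simp [Fin.sum_univ_four, hq₀.ne']
  rw [h]
  refine (convex_convexHull ℝ _).sum_mem (fun i _ => ?_) ?_ (fun i _ => ?_)
  · fin_cases i <;> simp [hw, hq₀.le]
  · simp only [Fin.sum_univ_four, Matrix.cons_val_zero, Matrix.cons_val_one, Matrix.cons_val_two,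
      Matrix.cons_val_three, Matrix.tail_cons, Matrix.head_cons]
    ring
  · fin_cases i <;> exact subset_convexHull ℝ _ (by simp)

lemma mem_two_smul_prism (hq : 2 ≤ q) : ![1, 1, 3] ∈ (2 : ℝ) • prism q := by
  have h : (![1, 1, 3] : Fin 3 → ℝ) = (2 : ℝ) • (![1 / 2, 1 / 2, 1] + ![0, 0, 1 / 2]) := by
    ext i; fin_cases i <;> norm_num
  rw [h]
  refine smul_mem_smul_set (add_mem_add (half_mem_tetra hq) ?_)
  rw [segment_eq_image]
  exact ⟨1 / 2, by norm_num, by ext i; fin_cases i <;> norm_num⟩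

lemma not_exists_latPts_prism_add_eq (hq : 3 < q) :
    ¬ ∃ u₁ u₂ : Fin 3 → ℝ, u₁ ∈ latPts (prism q) ∧ u₂ ∈ latPts (prism q) ∧
      ![1, 1, 3] = u₁ + u₂ := by
  rintro ⟨u, w, ⟨hu, hu_lat⟩, ⟨hw, -⟩, hsum⟩
  have hsum₀ : u 0 + w 0 = 1 := by simpa using (congrFun hsum 0).symm
  have hsum₁ : u 1 + w 1 = 1 := by simpa using (congrFun hsum 1).symm
  have hsum₂ : u 2 + w 2 = 3 := by simpa using (congrFun hsum 2).symm
  obtain ⟨⟨hu₀, hu₀'⟩, ⟨hu₁, hu₁'⟩, hu₂, hu₃, hu₄, hu₅⟩ :=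
    facet_bounds_of_mem_prism (by linarith) hu
  obtain ⟨-, -, hw₂, hw₃, hw₄, hw₅⟩ := facet_bounds_of_mem_prism (by linarith) hw
  obtain ⟨m₀, hm₀⟩ := hu_lat 0
  obtain ⟨m₁, hm₁⟩ := hu_lat 1
  rw [hm₀] at hu₀ hu₀' hsum₀ hu₃ hu₅
  rw [hm₁] at hu₁ hu₁' hsum₁ hu₄ hu₅
  rcases intCast_eq_zero_or_eq_one hu₀ hu₀' with h₀ | h₀ <;>
    rcases intCast_eq_zero_or_eq_one hu₁ hu₁' with h₁ | h₁ <;>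
    nlinarith

end BrunsGubeladze

/-- For `q ≥ 4`, the polytope `P_q = Q_q + I` (Bruns–Gubeladze) is not normal: some
lattice point of `2 P_q` is not a sum of two lattice points of `P_q`. -/
theorem stmt18 (q : ℕ) (hq : 4 ≤ q) :
    ∃ v : Fin 3 → ℝ, IsLat v ∧
      v ∈ (2 : ℝ) • (convexHull ℝ {(0 : Fin 3 → ℝ), ![1,0,0], ![0,1,0], ![1,1,(q : ℝ)]}
            + segment ℝ (0 : Fin 3 → ℝ) ![0,0,1]) ∧
      ¬ ∃ u₁ u₂ : Fin 3 → ℝ,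
          u₁ ∈ latPts (convexHull ℝ {(0 : Fin 3 → ℝ), ![1,0,0], ![0,1,0], ![1,1,(q : ℝ)]}
            + segment ℝ (0 : Fin 3 → ℝ) ![0,0,1]) ∧
          u₂ ∈ latPts (convexHull ℝ {(0 : Fin 3 → ℝ), ![1,0,0], ![0,1,0], ![1,1,(q : ℝ)]}
            + segment ℝ (0 : Fin 3 → ℝ) ![0,0,1]) ∧
          v = u₁ + u₂ := by
  have hq' : (4 : ℝ) ≤ q := by exact_mod_cast hq
  refine ⟨![1, 1, 3], fun i => ⟨![1, 1, 3] i, by fin_cases i <;> simp⟩,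
    BrunsGubeladze.mem_two_smul_prism (by linarith),
    BrunsGubeladze.not_exists_latPts_prism_add_eq (by linarith)⟩
end
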